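/- arXiv:2311.15263 — 4 statements merged into one kernel-verified Lean document; each statement's English description precedes it below -/
import Mathlib

section
/- For every m, n ∈ ℕ, the 2m-th moments satisfy E[Ẑ_n^{2m}] = E[Ž_n^{2m}] ≤ E[Z_n^{2m}]. -/
open MeasureTheory ProbabilityTheory Filter
open scoped ENNReal NNReal Topology

def walkβ : ℕ ⊕ (ℕ ⊕ ℕ) → Type
  | .inl _ => ℝ
  | .inr (.inl _) => Bool
  | .inr (.inr _) => ℕ

def walkσ : ∀ i, MeasurableSpace (walkβ i)
  | .inl _ => inferInstanceAs (MeasurableSpace ℝ)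
  | .inr (.inl _) => inferInstanceAs (MeasurableSpace Bool)
  | .inr (.inr _) => inferInstanceAs (MeasurableSpace ℕ)

def walkFam {Ω : Type*} (X : ℕ → Ω → ℝ) (ε : ℕ → Ω → Bool) (U : ℕ → Ω → ℕ) :
    ∀ i, Ω → walkβ i
  | .inl n => X n
  | .inr (.inl n) => ε n
  | .inr (.inr n) => U n

/-!
`Ž_n` and `Ẑ_n` follow the same genealogy and differ only by signs, so `|Ž_n| = |Ẑ_n|` pathwise
and their even moments agree.

For the bound, `Ẑ_n = X_{W_n}`, where `X = (Ẑ_1, …, Ẑ_{n-1}, Z_n)` and the random index `W_n` is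
`U_n` if `ε_n = 1` and `n` otherwise. `W_n` is a function of `(ε_n, U_n)`, and each `X_k` is a
function of the other variables, so the two are independent. Hence
`E φ(Ẑ_n) = ∑_k P(W_n = k) E φ(X_k)` is a convex combination of `E φ(Z_n)` and the `E φ(Ẑ_k)`,
`k < n`; by induction and monotonicity each of these is at most `E φ(Z_n)`.
-/

section Selection

variable {Ω ι : Type*} {W : Ω → ι} {s : Finset ι}

theorem biUnion_preimage_singleton_eq_univ (hWs : ∀ ω, W ω ∈ s) :
    ⋃ k ∈ s, W ⁻¹' {k} = Set.univ :=
  Set.eq_univ_of_forall fun ω => Set.mem_biUnion (hWs ω) rfl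

variable [MeasurableSpace ι] [MeasurableSingletonClass ι]

theorem measurable_comp_of_forall_mem {β : Type*} [MeasurableSpace β] {m : MeasurableSpace Ω}
    {f : ι → Ω → β} (hW : Measurable[m] W) (hWs : ∀ ω, W ω ∈ s)
    (hf : ∀ k ∈ s, Measurable[m] (f k)) : Measurable[m] fun ω => f (W ω) ω := by
  intro t ht
  have hpre : (fun ω => f (W ω) ω) ⁻¹' t = ⋃ k ∈ s, W ⁻¹' {k} ∩ f k ⁻¹' t := by
    ext ω
    simp only [Set.mem_preimage, Set.mem_iUnion, Set.mem_inter_iff, Set.mem_singleton_iff,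
      exists_prop]
    exact ⟨fun h => ⟨W ω, hWs ω, rfl, h⟩, by rintro ⟨k, -, rfl, h⟩; exact h⟩
  rw [hpre]
  exact Finset.measurableSet_biUnion s fun k hk =>
    (hW (measurableSet_singleton k)).inter (hf k hk ht)

variable {mΩ : MeasurableSpace Ω} {μ : Measure Ω} {f : ι → Ω → ℝ}

theorem integrable_comp_of_forall_mem (hW : Measurable W) (hWs : ∀ ω, W ω ∈ s)
    (hf : ∀ k ∈ s, Integrable (f k) μ) : Integrable (fun ω => f (W ω) ω) μ := by
  rw [← integrableOn_univ, ← biUnion_preimage_singleton_eq_univ hWs, integrableOn_finset_iUnion]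
  exact fun k hk => (hf k hk).integrableOn.congr_fun (fun ω (hω : W ω = k) => by rw [hω])
    (hW (measurableSet_singleton k))

theorem integral_comp_eq_sum_of_indepFun (hW : Measurable W) (hWs : ∀ ω, W ω ∈ s)
    (hf : ∀ k ∈ s, Integrable (f k) μ) (hind : ∀ k ∈ s, IndepFun W (f k) μ) :
    ∫ ω, f (W ω) ω ∂μ = ∑ k ∈ s, μ.real (W ⁻¹' {k}) * ∫ ω, f k ω ∂μ := by
  have hfiber : ∀ k ∈ s,
      ∫ ω in W ⁻¹' {k}, f (W ω) ω ∂μ = μ.real (W ⁻¹' {k}) * ∫ ω, f k ω ∂μ := fun k hk => by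
    rw [setIntegral_congr_fun (hW (measurableSet_singleton k))
      (fun ω (hω : W ω = k) => by rw [hω])]
    exact Indep.setIntegral_eq_mul (f := id) hW.comap_le (hind k hk) (hf k hk).aemeasurable
      ⟨{k}, measurableSet_singleton k, rfl⟩ aestronglyMeasurable_id
  rw [← setIntegral_univ, ← biUnion_preimage_singleton_eq_univ hWs,
    integral_biUnion_finset s (fun k _ => hW (measurableSet_singleton k))
      (fun j _ k _ hjk => Set.disjoint_singleton.2 hjk |>.preimage W)
      (fun k _ => (integrable_comp_of_forall_mem hW hWs hf).integrableOn),
    Finset.sum_congr rfl hfiber]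

theorem integral_comp_le_of_indepFun [IsProbabilityMeasure μ] {c : ℝ} (hW : Measurable W)
    (hWs : ∀ ω, W ω ∈ s) (hf : ∀ k ∈ s, Integrable (f k) μ)
    (hind : ∀ k ∈ s, IndepFun W (f k) μ) (hc : ∀ k ∈ s, ∫ ω, f k ω ∂μ ≤ c) :
    ∫ ω, f (W ω) ω ∂μ ≤ c :=
  calc ∫ ω, f (W ω) ω ∂μ = ∑ k ∈ s, μ.real (W ⁻¹' {k}) * ∫ ω, f k ω ∂μ :=
        integral_comp_eq_sum_of_indepFun hW hWs hf hind
    _ ≤ ∑ k ∈ s, μ.real (W ⁻¹' {k}) * c :=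
        Finset.sum_le_sum fun k hk => mul_le_mul_of_nonneg_left (hc k hk) measureReal_nonneg
    _ = c := by
        rw [← Finset.sum_mul, sum_measureReal_preimage_singleton s
          (fun k _ => hW (measurableSet_singleton k)),
          Set.preimage_eq_univ_iff.2 (Set.range_subset_iff.2 hWs), probReal_univ, one_mul]

end Selection

theorem indepFun_of_measurable_biSup_of_disjoint {Ω ι β γ : Type*} {mΩ : MeasurableSpace Ω}
    {μ : Measure Ω} [MeasurableSpace β] [MeasurableSpace γ] {m : ι → MeasurableSpace Ω}
    (h_le : ∀ i, m i ≤ mΩ) (h_indep : iIndep m μ) {S T : Set ι} (hST : Disjoint S T)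
    {X : Ω → β} {Y : Ω → γ} (hX : Measurable[⨆ i ∈ S, m i] X)
    (hY : Measurable[⨆ i ∈ T, m i] Y) : IndepFun X Y μ :=
  indep_of_indep_of_le_left
    (indep_of_indep_of_le_right (indep_iSup_of_disjoint h_le h_indep hST) hY.comap_le)
    hX.comap_le

theorem forall_mem_Icc_update {α : Type*} {Y : ℕ → α} {a : α} {n : ℕ} {P : α → Prop}
    (ha : P a) (hY : ∀ k ∈ Finset.Ico 1 n, P (Y k)) :
    ∀ k ∈ Finset.Icc 1 n, P (Function.update Y n a k) := by
  intro k hk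
  obtain ⟨hk1, hkn⟩ := Finset.mem_Icc.1 hk
  rcases hkn.eq_or_lt with rfl | hlt
  · rwa [Function.update_self]
  · rw [Function.update_of_ne hlt.ne]
    exact hY k (Finset.mem_Ico.2 ⟨hk1, hlt⟩)

section ReinforcedSequence

variable {Ω : Type*} {Z Y : ℕ → Ω → ℝ} {ε : ℕ → Ω → Bool} {U : ℕ → Ω → ℕ}

structure IsReinforcedSequence (Z : ℕ → Ω → ℝ) (ε : ℕ → Ω → Bool) (U : ℕ → Ω → ℕ)
    (Y : ℕ → Ω → ℝ) : Prop where
  U_mem : ∀ n, 2 ≤ n → ∀ ω, U n ω ∈ Finset.Icc 1 (n - 1)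
  one : Y 1 = Z 1
  step : ∀ n, 2 ≤ n → ∀ ω, Y n ω = if ε n ω = true then Y (U n ω) ω else Z n ω

def stepIndex (ε : ℕ → Ω → Bool) (U : ℕ → Ω → ℕ) (n : ℕ) (ω : Ω) : ℕ :=
  if ε n ω = true then U n ω else n

theorem measurable_stepIndex {m : MeasurableSpace Ω} {n : ℕ} (hε : Measurable[m] (ε n))
    (hU : Measurable[m] (U n)) : Measurable[m] (stepIndex ε U n) :=
  Measurable.ite (hε (measurableSet_singleton true)) hU measurable_const

namespace IsReinforcedSequence

theorem stepIndex_mem_Icc (hY : IsReinforcedSequence Z ε U Y) {n : ℕ} (hn : 2 ≤ n) (ω : Ω) :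
    stepIndex ε U n ω ∈ Finset.Icc 1 n := by
  have := Finset.mem_Icc.1 (hY.U_mem n hn ω)
  unfold stepIndex
  split_ifs <;> simp only [Finset.mem_Icc] <;> omega

theorem eq_update_stepIndex (hY : IsReinforcedSequence Z ε U Y) {n : ℕ} (hn : 2 ≤ n) (ω : Ω) :
    Y n ω = Function.update Y n (Z n) (stepIndex ε U n ω) ω := by
  rw [hY.step n hn ω, stepIndex]
  split_ifs
  · have := Finset.mem_Icc.1 (hY.U_mem n hn ω)
    rw [Function.update_of_ne (by omega)]
  · rw [Function.update_self]

theorem abs_eq_abs_of_neg_step (hY : IsReinforcedSequence Z ε U Y) {Y' : ℕ → Ω → ℝ}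
    (hY'1 : Y' 1 = Z 1)
    (hY'step : ∀ n, 2 ≤ n → ∀ ω, Y' n ω = if ε n ω = true then -Y' (U n ω) ω else Z n ω) :
    ∀ n, 1 ≤ n → ∀ ω, |Y' n ω| = |Y n ω| := by
  intro n
  induction n using Nat.strong_induction_on with
  | _ n ih =>
    intro hn ω
    rcases hn.eq_or_lt with rfl | hn
    · rw [hY.one, hY'1]
    · have hU := Finset.mem_Icc.1 (hY.U_mem n hn ω)
      rw [hY.step n hn ω, hY'step n hn ω]
      split_ifs
      · rw [abs_neg, ih _ (by omega) hU.1 ω]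
      · rfl

theorem measurable {m : ℕ → MeasurableSpace Ω} (hY : IsReinforcedSequence Z ε U Y)
    (hm : Monotone m) (hZ : ∀ n, Measurable[m n] (Z n)) (hε : ∀ n, Measurable[m n] (ε n))
    (hU : ∀ n, Measurable[m n] (U n)) : ∀ n, 1 ≤ n → Measurable[m n] (Y n) := by
  intro n
  induction n using Nat.strong_induction_on with
  | _ n ih =>
    intro hn
    rcases hn.eq_or_lt with rfl | hn
    · rw [hY.one]
      exact hZ 1
    · rw [funext (hY.eq_update_stepIndex hn)]
      refine measurable_comp_of_forall_mem (measurable_stepIndex (hε n) (hU n))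
        (hY.stepIndex_mem_Icc hn) (forall_mem_Icc_update (hZ n) fun k hk => ?_)
      obtain ⟨hk1, hkn⟩ := Finset.mem_Ico.1 hk
      exact (ih k hkn hk1).mono (hm hkn.le) le_rfl

end IsReinforcedSequence

end ReinforcedSequence

def walkIndex : ℕ ⊕ (ℕ ⊕ ℕ) → ℕ
  | .inl n | .inr (.inl n) | .inr (.inr n) => n

@[reducible] def walkPast {Ω : Type*} (Z : ℕ → Ω → ℝ) (ε : ℕ → Ω → Bool) (U : ℕ → Ω → ℕ) (n : ℕ) :
    MeasurableSpace Ω :=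
  ⨆ i ∈ {i | walkIndex i ≤ n}, (walkσ i).comap (walkFam Z ε U i)

section Walk

variable {Ω : Type*} {mΩ : MeasurableSpace Ω} {μ : Measure Ω} {Z Y : ℕ → Ω → ℝ}
  {ε : ℕ → Ω → Bool} {U : ℕ → Ω → ℕ}

theorem walkPast_mono : Monotone (walkPast Z ε U) :=
  fun _ _ h => biSup_mono fun _ hi => le_trans hi h

theorem comap_walkFam_le_walkPast {i : ℕ ⊕ (ℕ ⊕ ℕ)} {n : ℕ} (h : walkIndex i ≤ n) :
    (walkσ i).comap (walkFam Z ε U i) ≤ walkPast Z ε U n :=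
  le_iSup₂ (f := fun i (_ : i ∈ {i | walkIndex i ≤ n}) => (walkσ i).comap (walkFam Z ε U i))
    i h

theorem IsReinforcedSequence.measurable_walkPast (hY : IsReinforcedSequence Z ε U Y) :
    ∀ n, 1 ≤ n → Measurable[walkPast Z ε U n] (Y n) :=
  hY.measurable walkPast_mono
    (fun n => measurable_iff_comap_le.2 (comap_walkFam_le_walkPast (i := .inl n) le_rfl))
    (fun n => measurable_iff_comap_le.2 (comap_walkFam_le_walkPast (i := .inr (.inl n)) le_rfl))
    (fun n => measurable_iff_comap_le.2 (comap_walkFam_le_walkPast (i := .inr (.inr n)) le_rfl))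

theorem IsReinforcedSequence.indepFun_stepIndex (hY : IsReinforcedSequence Z ε U Y)
    (hZ : ∀ n, Measurable (Z n)) (hε : ∀ n, Measurable (ε n)) (hU : ∀ n, Measurable (U n))
    (hindep : iIndepFun (m := walkσ) (walkFam Z ε U) μ) (n : ℕ) :
    ∀ k ∈ Finset.Icc 1 n, IndepFun (stepIndex ε U n) (Function.update Y n (Z n) k) μ := by
  set S : Set (ℕ ⊕ (ℕ ⊕ ℕ)) := {.inr (.inl n), .inr (.inr n)}
  set mI : ∀ i, MeasurableSpace Ω := fun i => (walkσ i).comap (walkFam Z ε U i)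
  have hle : ∀ i, mI i ≤ mΩ := by
    rintro (j | j | j)
    exacts [(hZ j).comap_le, (hε j).comap_le, (hU j).comap_le]
  have hS : ∀ i ∈ S, mI i ≤ ⨆ j ∈ S, mI j :=
    fun i hi => le_iSup₂ (f := fun j (_ : j ∈ S) => mI j) i hi
  have hT : ∀ i ∈ Sᶜ, mI i ≤ ⨆ j ∈ Sᶜ, mI j :=
    fun i hi => le_iSup₂ (f := fun j (_ : j ∈ Sᶜ) => mI j) i hi
  have hW : Measurable[⨆ j ∈ S, mI j] (stepIndex ε U n) :=
    measurable_stepIndex (measurable_iff_comap_le.2 (hS (.inr (.inl n)) (by simp [S])))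
      (measurable_iff_comap_le.2 (hS (.inr (.inr n)) (by simp [S])))
  refine forall_mem_Icc_update (P := fun X => IndepFun (stepIndex ε U n) X μ)
    (indepFun_of_measurable_biSup_of_disjoint hle hindep disjoint_compl_right hW
      (measurable_iff_comap_le.2 (hT (.inl n) (by simp [S])))) fun k hk => ?_
  obtain ⟨hk1, hkn⟩ := Finset.mem_Ico.1 hk
  refine indepFun_of_measurable_biSup_of_disjoint hle hindep disjoint_compl_right hW
    ((hY.measurable_walkPast k hk1).mono (biSup_mono fun i hi => ?_) le_rfl)
  rintro (rfl | rfl) <;> simp only [Set.mem_ofPred_eq, walkIndex] at hi <;> omega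

theorem IsReinforcedSequence.integrable_and_integral_comp_le [IsProbabilityMeasure μ]
    (hY : IsReinforcedSequence Z ε U Y) (hZ : ∀ n, Measurable (Z n))
    (hε : ∀ n, Measurable (ε n)) (hU : ∀ n, Measurable (U n))
    (hindep : iIndepFun (m := walkσ) (walkFam Z ε U) μ) {φ : ℝ → ℝ} (hφ : Measurable φ)
    (hint : ∀ n, Integrable (fun ω => φ (Z n ω)) μ)
    (hmono : Monotone fun n => ∫ ω, φ (Z n ω) ∂μ) :
    ∀ n, 1 ≤ n → Integrable (fun ω => φ (Y n ω)) μ ∧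
      ∫ ω, φ (Y n ω) ∂μ ≤ ∫ ω, φ (Z n ω) ∂μ := by
  intro n
  induction n using Nat.strong_induction_on with
  | _ n ih =>
    intro hn
    rcases hn.eq_or_lt with rfl | hn
    · rw [hY.one]
      exact ⟨hint 1, le_rfl⟩
    · have hsel : (fun ω => φ (Y n ω))
          = fun ω => φ (Function.update Y n (Z n) (stepIndex ε U n ω) ω) :=
        funext fun ω => by rw [← hY.eq_update_stepIndex hn]
      have hW := measurable_stepIndex (hε n) (hU n)
      have hpieces := forall_mem_Icc_update (Y := Y) (a := Z n)
        (P := fun X => Integrable (fun ω => φ (X ω)) μ ∧ ∫ ω, φ (X ω) ∂μ ≤ ∫ ω, φ (Z n ω) ∂μ)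
        ⟨hint n, le_rfl⟩ fun k hk => by
          obtain ⟨hk1, hkn⟩ := Finset.mem_Ico.1 hk
          obtain ⟨hint_k, hle_k⟩ := ih k hkn hk1
          exact ⟨hint_k, hle_k.trans (hmono hkn.le)⟩
      have hind : ∀ k ∈ Finset.Icc 1 n,
          IndepFun (stepIndex ε U n) (fun ω => φ (Function.update Y n (Z n) k ω)) μ :=
        fun k hk => (hY.indepFun_stepIndex hZ hε hU hindep n k hk).comp measurable_id hφ
      rw [hsel]
      exact ⟨integrable_comp_of_forall_mem hW (hY.stepIndex_mem_Icc hn)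
          fun k hk => (hpieces k hk).1,
        integral_comp_le_of_indepFun (f := fun k ω => φ (Function.update Y n (Z n) k ω)) hW
          (hY.stepIndex_mem_Icc hn) (fun k hk => (hpieces k hk).1) hind
          fun k hk => (hpieces k hk).2⟩

end Walk

theorem reinforced_step_even_moment_bound_general
    {Ω : Type*} {mΩ : MeasurableSpace Ω} {μ : Measure Ω} [IsProbabilityMeasure μ]
    (Z : ℕ → Ω → ℝ) (ε : ℕ → Ω → Bool) (U : ℕ → Ω → ℕ)
    (hZmeas : ∀ n, Measurable (Z n)) (hεmeas : ∀ n, Measurable (ε n))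
    (hUmeas : ∀ n, Measurable (U n))
    (hindep : iIndepFun (m := walkσ) (walkFam Z ε U) μ)
    (hUrange : ∀ n, 2 ≤ n → ∀ ω, U n ω ∈ Finset.Icc 1 (n - 1))
    (hmom : ∀ m n : ℕ, Integrable (fun ω => (Z n ω) ^ (2 * m)) μ)
    (hmono : ∀ m : ℕ, ∀ j k : ℕ, j ≤ k →
      ∫ ω, (Z j ω) ^ (2 * m) ∂μ ≤ ∫ ω, (Z k ω) ^ (2 * m) ∂μ)
    (hatZ checkZ : ℕ → Ω → ℝ)
    (hhat1 : hatZ 1 = Z 1) (hcheck1 : checkZ 1 = Z 1)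
    (hhatrec : ∀ n, 2 ≤ n → ∀ ω,
      hatZ n ω = if ε n ω = true then hatZ (U n ω) ω else Z n ω)
    (hcheckrec : ∀ n, 2 ≤ n → ∀ ω,
      checkZ n ω = if ε n ω = true then -checkZ (U n ω) ω else Z n ω) :
    ∀ m n : ℕ, 1 ≤ n →
      (∫ ω, (hatZ n ω) ^ (2 * m) ∂μ = ∫ ω, (checkZ n ω) ^ (2 * m) ∂μ) ∧
      ∫ ω, (hatZ n ω) ^ (2 * m) ∂μ ≤ ∫ ω, (Z n ω) ^ (2 * m) ∂μ := by
  have hhat : IsReinforcedSequence Z ε U hatZ := ⟨hUrange, hhat1, hhatrec⟩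
  intro m n hn
  have hpow : ∀ ω, checkZ n ω ^ (2 * m) = hatZ n ω ^ (2 * m) := fun ω => by
    rw [← (even_two_mul m).pow_abs, hhat.abs_eq_abs_of_neg_step hcheck1 hcheckrec n hn ω,
      (even_two_mul m).pow_abs]
  refine ⟨integral_congr_ae (ae_of_all _ fun ω => (hpow ω).symm), ?_⟩
  exact (hhat.integrable_and_integral_comp_le hZmeas hεmeas hUmeas hindep
    (measurable_id.pow_const _) (hmom m) (fun j k => hmono m j k) n hn).2

/-- For every `m, n ∈ ℕ`, the `2m`-th moments of the reinforced steps satisfy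
`E[Ẑ_n^{2m}] = E[Ž_n^{2m}] ≤ E[Z_n^{2m}]`. -/
theorem reinforced_step_even_moment_bound
    {Ω : Type*} {mΩ : MeasurableSpace Ω} {μ : Measure Ω} [IsProbabilityMeasure μ]
    (p : ℝ) (hp : p ∈ Set.Ioo (0 : ℝ) 1)
    (Z : ℕ → Ω → ℝ) (ε : ℕ → Ω → Bool) (U : ℕ → Ω → ℕ)
    (hZmeas : ∀ n, Measurable (Z n)) (hεmeas : ∀ n, Measurable (ε n))
    (hUmeas : ∀ n, Measurable (U n))
    (hindep : iIndepFun (m := walkσ) (walkFam Z ε U) μ)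
    (hε : ∀ n, 2 ≤ n → μ {ω | ε n ω = true} = ENNReal.ofReal p)
    (hU : ∀ n, 2 ≤ n → ∀ k ∈ Finset.Icc 1 (n - 1), μ {ω | U n ω = k} = (((n - 1 : ℕ)) : ℝ≥0∞)⁻¹)
    (hUrange : ∀ n, 2 ≤ n → ∀ ω, U n ω ∈ Finset.Icc 1 (n - 1))
    (hmom : ∀ m n : ℕ, Integrable (fun ω => (Z n ω) ^ (2 * m)) μ)
    (hmono : ∀ m : ℕ, ∀ j k : ℕ, j ≤ k →
      ∫ ω, (Z j ω) ^ (2 * m) ∂μ ≤ ∫ ω, (Z k ω) ^ (2 * m) ∂μ)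
    (hatZ checkZ : ℕ → Ω → ℝ)
    (hhat1 : hatZ 1 = Z 1) (hcheck1 : checkZ 1 = Z 1)
    (hhatrec : ∀ n, 2 ≤ n → ∀ ω,
      hatZ n ω = if ε n ω = true then hatZ (U n ω) ω else Z n ω)
    (hcheckrec : ∀ n, 2 ≤ n → ∀ ω,
      checkZ n ω = if ε n ω = true then -checkZ (U n ω) ω else Z n ω) :
    ∀ m n : ℕ, 1 ≤ n →
      (∫ ω, (hatZ n ω) ^ (2 * m) ∂μ = ∫ ω, (checkZ n ω) ^ (2 * m) ∂μ) ∧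
      ∫ ω, (hatZ n ω) ^ (2 * m) ∂μ ≤ ∫ ω, (Z n ω) ^ (2 * m) ∂μ :=
  reinforced_step_even_moment_bound_general (mΩ := mΩ) Z ε U hZmeas hεmeas hUmeas hindep hUrange
    hmom hmono hatZ checkZ hhat1 hcheck1 hhatrec hcheckrec
end

section
/- Let {a_n} and {b_n} be real sequences with a_{n+1} = ((n+x)/n) a_n + b_{n+1} for all n ≥ 1. If b_n = o(n^{−r}) for some r > 0, then a_n = o(n^{1−r}) if x < 1−r, a_n = o(n^x log n) if x = 1−r, and a_n = O(n^x) if x > 1−r. -/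
/-!
Variation of constants: `p n = ∏_{N ≤ k < n} (k + x) / k` solves the homogeneous recursion, and
`a n / p n = a N / p N + ∑_{N ≤ k < n} b (k + 1) / p (k + 1)`. Since
`log (1 + x / k) - x log (1 + 1 / k) = O(1 / k²)` is summable, `p n` is comparable to `n ^ x`, so
the summands are `o(k ^ (-(r + x)))`. Their partial sums are `o(n ^ (1 - r - x))`, `o(log n)` or
bounded according as `r + x < 1`, `r + x = 1` or `r + x > 1`; multiplying back by `p n` gives the
three regimes.
-/

open Filter Finset Asymptotics Real
open scoped Topology

theorem abs_log_one_add_sub_self_le {t : ℝ} (ht : |t| ≤ 1 / 2) :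
    |log (1 + t) - t| ≤ 2 * t ^ 2 := by
  have h := abs_log_sub_add_sum_range_le (x := -t) (by rw [abs_neg]; linarith) 1
  rw [abs_neg, sub_neg_eq_add, add_comm 1 t] at h
  simp only [range_one, sum_singleton, zero_add, pow_one, Nat.cast_zero, div_one] at h
  calc |log (1 + t) - t| = |-t + log (t + 1)| := by rw [add_comm 1 t]; ring_nf
    _ ≤ |t| ^ 2 / (1 - |t|) := h
    _ ≤ 2 * t ^ 2 := by
      rw [div_le_iff₀ (by linarith), sq_abs]
      nlinarith [sq_nonneg t]

theorem abs_log_one_add_div_sub_mul_log_le {x k : ℝ} (hk : 2 * max 1 |x| ≤ k) :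
    |log (1 + x / k) - x * log (1 + 1 / k)| ≤ 2 * (x ^ 2 + |x|) / k ^ 2 := by
  have hk0 : 0 < k := by linarith [le_max_left 1 |x|]
  have hx : |x / k| ≤ 1 / 2 := by
    rw [abs_div, abs_of_pos hk0, div_le_iff₀ hk0]; linarith [le_max_right 1 |x|]
  have h1 : |1 / k| ≤ 1 / 2 := by
    rw [abs_of_pos (by positivity), div_le_iff₀ hk0]; linarith [le_max_left 1 |x|]
  calc |log (1 + x / k) - x * log (1 + 1 / k)|
      = |(log (1 + x / k) - x / k) - x * (log (1 + 1 / k) - 1 / k)| := by ring_nf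
    _ ≤ |log (1 + x / k) - x / k| + |x| * |log (1 + 1 / k) - 1 / k| := by
      rw [← abs_mul]; exact abs_sub _ _
    _ ≤ 2 * (x / k) ^ 2 + |x| * (2 * (1 / k) ^ 2) := by
      gcongr
      exacts [abs_log_one_add_sub_self_le hx, abs_log_one_add_sub_self_le h1]
    _ = 2 * (x ^ 2 + |x|) / k ^ 2 := by field_simp

theorem add_div_self_pos {x k : ℝ} (hk : 2 * max 1 |x| ≤ k) : 0 < (k + x) / k :=
  div_pos (by linarith [le_max_left 1 |x|, le_max_right 1 |x|, neg_abs_le x])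
    (by linarith [le_max_left 1 |x|])

theorem isTheta_of_abs_log_sub_log_le {α : Type*} {l : Filter α} {f g : α → ℝ}
    (hf : ∀ᶠ a in l, 0 < f a) (hg : ∀ᶠ a in l, 0 < g a) {B : ℝ}
    (h : ∀ᶠ a in l, |log (f a) - log (g a)| ≤ B) : f =Θ[l] g := by
  have : (fun a => exp (log (f a))) =Θ[l] fun a => exp (log (g a)) :=
    isTheta_exp_comp_exp_comp.2 ⟨B, h⟩
  have hf' : (fun a => exp (log (f a))) =ᶠ[l] f := hf.mono fun a ha => exp_log ha
  have hg' : (fun a => exp (log (g a))) =ᶠ[l] g := hg.mono fun a ha => exp_log ha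
  exact ⟨this.1.congr' hf' hg', this.2.congr' hg' hf'⟩

theorem log_prod_Ico_add_div_sub_mul_log {x : ℝ} {N : ℕ} (hN : 2 * max 1 |x| ≤ N) {n : ℕ}
    (hn : N ≤ n) :
    log (∏ k ∈ Ico N n, ((k : ℝ) + x) / k) - x * log n
      = ∑ k ∈ Ico N n, (log (1 + x / k) - x * log (1 + 1 / k)) - x * log N := by
  have hfac : ∀ k : ℕ, N ≤ k → 0 < ((k : ℝ) + x) / k := fun k hk =>
    add_div_self_pos (hN.trans (by exact_mod_cast hk))
  induction n, hn using Nat.le_induction with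
  | base => simp
  | succ n hn ih =>
    have hn0 : (0 : ℝ) < n := by linarith [le_max_left 1 |x|, hN.trans (Nat.cast_le.2 hn)]
    have hP : ∏ k ∈ Ico N n, ((k : ℝ) + x) / k ≠ 0 :=
      (prod_pos fun k hk => hfac k (mem_Ico.1 hk).1).ne'
    rw [prod_Ico_succ_top hn, log_mul hP (hfac n hn).ne', sum_Ico_succ_top hn]
    have e1 : ((n : ℝ) + x) / n = 1 + x / n := by field_simp
    have e2 : log ((n + 1 : ℕ) : ℝ) = log n + log (1 + 1 / n) := by
      rw [← log_mul hn0.ne' (by positivity)]; push_cast; congr 1; field_simp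
    rw [e1, e2]
    linear_combination ih

theorem isTheta_prod_Ico_add_div_rpow {x : ℝ} {N : ℕ} (hN : 2 * max 1 |x| ≤ N) :
    (fun n : ℕ => ∏ k ∈ Ico N n, ((k : ℝ) + x) / k) =Θ[atTop] fun n => (n : ℝ) ^ x := by
  have hk : ∀ k : ℕ, N ≤ k → 2 * max 1 |x| ≤ k := fun k hk =>
    hN.trans (by exact_mod_cast hk)
  have hsum : Summable fun k : ℕ => 2 * (x ^ 2 + |x|) / (k : ℝ) ^ 2 := by
    simpa only [mul_one_div] using
      (summable_one_div_nat_pow.2 one_lt_two).mul_left (2 * (x ^ 2 + |x|))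
  refine isTheta_of_abs_log_sub_log_le
    (B := ∑' k : ℕ, 2 * (x ^ 2 + |x|) / (k : ℝ) ^ 2 + |x * log N|)
    (Eventually.of_forall fun n =>
      prod_pos fun k hk' => add_div_self_pos (hk k (mem_Ico.1 hk').1))
    ((eventually_gt_atTop 0).mono fun n hn => rpow_pos_of_pos (Nat.cast_pos.2 hn) x) ?_
  filter_upwards [eventually_ge_atTop N, eventually_gt_atTop 0] with n hn hn0
  rw [log_rpow (Nat.cast_pos.2 hn0), log_prod_Ico_add_div_sub_mul_log hN hn]
  refine (abs_sub _ _).trans (add_le_add_left ?_ _)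
  calc |∑ k ∈ Ico N n, (log (1 + x / k) - x * log (1 + 1 / k))|
      ≤ ∑ k ∈ Ico N n, 2 * (x ^ 2 + |x|) / (k : ℝ) ^ 2 :=
        (abs_sum_le_sum_abs _ _).trans <| sum_le_sum fun k hk' =>
          abs_log_one_add_div_sub_mul_log_le (hk k (mem_Ico.1 hk').1)
    _ ≤ ∑' k : ℕ, 2 * (x ^ 2 + |x|) / (k : ℝ) ^ 2 :=
        hsum.sum_le_tsum _ fun k _ => by positivity

theorem div_eq_div_add_sum_Ico_of_recurrence {K : Type*} [Field K] {a b p q : ℕ → K} {N : ℕ}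
    (hp₀ : ∀ n, N ≤ n → p n ≠ 0) (hp : ∀ n, N ≤ n → p (n + 1) = q n * p n)
    (ha : ∀ n, N ≤ n → a (n + 1) = q n * a n + b (n + 1)) {n : ℕ} (hn : N ≤ n) :
    a n / p n = a N / p N + ∑ k ∈ Ico N n, b (k + 1) / p (k + 1) := by
  induction n, hn using Nat.le_induction with
  | base => simp
  | succ n hn ih =>
    have hq : q n ≠ 0 := left_ne_zero_of_mul (hp n hn ▸ hp₀ (n + 1) (by omega))
    rw [sum_Ico_succ_top hn, ← add_assoc, ← ih, ha n hn, hp n hn, add_div,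
      mul_div_mul_left _ _ hq]

theorem min_one_mul_rpow_neg_le_sub {s t : ℝ} (hs : s < 1) (ht : 0 ≤ t) :
    min 1 (1 - s) * (t + 1) ^ (-s) ≤ (t + 1) ^ (1 - s) - t ^ (1 - s) := by
  have ht1 : 0 < t + 1 := by linarith
  have hsplit : ∀ u : ℝ, 0 < u → u ^ (1 - s) = u * u ^ (-s) := fun u hu => by
    rw [sub_eq_add_neg, rpow_add hu, rpow_one]
  rcases le_or_gt s 0 with hs0 | hs0
  · have hmono : t ^ (-s) ≤ (t + 1) ^ (-s) := rpow_le_rpow ht (by linarith) (by linarith)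
    have ht' : t ^ (1 - s) = t * t ^ (-s) := by
      rw [sub_eq_add_neg, rpow_add' ht (by linarith), rpow_one]
    rw [hsplit _ ht1, ht', min_eq_left (by linarith)]
    nlinarith [rpow_nonneg ht (-s)]
  · -- Bernoulli's inequality `(1 - 1/(t+1)) ^ (1-s) ≤ 1 - (1-s)/(t+1)`
    have hb := rpow_one_add_le_one_add_mul_self (s := -(t + 1)⁻¹) (p := 1 - s)
      (by rw [neg_le_neg_iff]; exact inv_le_one_of_one_le₀ (by linarith)) (by linarith)
      (by linarith)
    have heq : 1 + -(t + 1)⁻¹ = t / (t + 1) := by field_simp; ring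
    rw [heq, div_rpow ht ht1.le, div_le_iff₀ (rpow_pos_of_pos ht1 _)] at hb
    rw [min_eq_right (by linarith)]
    have hinv : (t + 1)⁻¹ * (t + 1) ^ (1 - s) = (t + 1) ^ (-s) := by
      rw [hsplit _ ht1, inv_mul_cancel_left₀ ht1.ne']
    nlinarith

theorem sum_range_rpow_neg_le {s : ℝ} (hs : s < 1) (n : ℕ) :
    ∑ k ∈ range n, ((k : ℝ) + 1) ^ (-s) ≤ (n : ℝ) ^ (1 - s) / min 1 (1 - s) := by
  have hm : 0 < min 1 (1 - s) := lt_min one_pos (by linarith)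
  rw [le_div_iff₀ hm, sum_mul]
  calc ∑ k ∈ range n, ((k : ℝ) + 1) ^ (-s) * min 1 (1 - s)
      ≤ ∑ k ∈ range n, (((k + 1 : ℕ) : ℝ) ^ (1 - s) - (k : ℝ) ^ (1 - s)) := by
        gcongr with k
        rw [mul_comm]; push_cast
        exact min_one_mul_rpow_neg_le_sub hs k.cast_nonneg
    _ = (n : ℝ) ^ (1 - s) := by
        rw [sum_range_sub (fun k : ℕ => (k : ℝ) ^ (1 - s))]
        simp [zero_rpow (by linarith : (1 - s) ≠ 0)]

theorem tendsto_sum_range_rpow_neg_atTop {s : ℝ} (hs : s ≤ 1) :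
    Tendsto (fun n => ∑ k ∈ range n, ((k : ℝ) + 1) ^ (-s)) atTop atTop := by
  refine tendsto_atTop_mono (fun n => sum_le_sum fun k _ => ?_)
    tendsto_sum_range_one_div_nat_succ_atTop
  rw [one_div, ← rpow_neg_one]
  exact rpow_le_rpow_of_exponent_le (by linarith [k.cast_nonneg (α := ℝ)]) (by linarith)

theorem isLittleO_const_add_sum_range_rpow {e : ℕ → ℝ} {s : ℝ} (hs : s < 1)
    (he : e =o[atTop] fun k => ((k : ℝ) + 1) ^ (-s)) (c : ℝ) :
    (fun n => c + ∑ k ∈ range n, e k) =o[atTop] fun n => (n : ℝ) ^ (1 - s) := by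
  have hpow : Tendsto (fun n : ℕ => (n : ℝ) ^ (1 - s)) atTop atTop :=
    (tendsto_rpow_atTop (by linarith)).comp tendsto_natCast_atTop_atTop
  refine (isLittleO_const_left.2 (Or.inr (tendsto_norm_atTop_atTop.comp hpow))).add ?_
  refine (he.sum_range (fun k => by positivity)
    (tendsto_sum_range_rpow_neg_atTop hs.le)).trans_isBigO
    (IsBigO.of_bound (1 / min 1 (1 - s)) (Eventually.of_forall fun n => ?_))
  rw [norm_of_nonneg (sum_nonneg fun k _ => by positivity), norm_of_nonneg (by positivity),
    ← mul_div_right_comm, one_mul]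
  exact sum_range_rpow_neg_le hs n

theorem isLittleO_const_add_sum_range_log {e : ℕ → ℝ}
    (he : e =o[atTop] fun k => ((k : ℝ) + 1)⁻¹) (c : ℝ) :
    (fun n => c + ∑ k ∈ range n, e k) =o[atTop] fun n => log n := by
  have hlog : Tendsto (fun n : ℕ => log n) atTop atTop :=
    tendsto_log_atTop.comp tendsto_natCast_atTop_atTop
  have hconst : ∀ d : ℝ, (fun _ : ℕ => d) =o[atTop] fun n => log n := fun d =>
    isLittleO_const_left.2 (Or.inr (tendsto_norm_atTop_atTop.comp hlog))
  have hharm : (fun n => ∑ k ∈ range n, ((k : ℝ) + 1)⁻¹) =O[atTop] fun n => 1 + log n :=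
    IsBigO.of_bound 1 <| Eventually.of_forall fun n => by
      have h := harmonic_le_one_add_log n
      push_cast [harmonic] at h
      rw [norm_of_nonneg (sum_nonneg fun k _ => by positivity), one_mul]
      exact h.trans (le_abs_self _)
  refine (hconst c).add <| (he.sum_range (fun k => by positivity) ?_).trans_isBigO <|
    hharm.trans ((hconst 1).isBigO.add (isBigO_refl _ _))
  simpa only [one_div] using tendsto_sum_range_one_div_nat_succ_atTop

theorem isBigO_const_add_sum_range_rpow {e : ℕ → ℝ} {s : ℝ} (hs : 1 < s)
    (he : e =O[atTop] fun k => ((k : ℝ) + 1) ^ (-s)) (c : ℝ) :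
    (fun n => c + ∑ k ∈ range n, e k) =O[atTop] fun _ => (1 : ℝ) := by
  have hsum : Summable fun k : ℕ => ((k : ℝ) + 1) ^ (-s) := by
    simpa using (summable_nat_add_iff 1).2 (summable_nat_rpow.2 (by linarith : -s < -1))
  exact ((summable_of_isBigO_nat hsum he).hasSum.tendsto_sum_nat.const_add c).isBigO_one ℝ

theorem isLittleO_rpow_neg_of_tendsto_mul_rpow {b : ℕ → ℝ} {r : ℝ}
    (hb : Tendsto (fun n : ℕ => b n * (n : ℝ) ^ r) atTop (𝓝 0)) :
    b =o[atTop] fun n => (n : ℝ) ^ (-r) := by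
  have h := ((isLittleO_one_iff ℝ).2 hb).mul_isBigO
    (isBigO_refl (fun n : ℕ => (n : ℝ) ^ (-r)) _)
  refine h.congr' ?_ (Eventually.of_forall fun n => one_mul _)
  filter_upwards [eventually_gt_atTop 0] with n hn
  rw [rpow_neg n.cast_nonneg, mul_inv_cancel_right₀ (rpow_pos_of_pos (Nat.cast_pos.2 hn) r).ne']

theorem isLittleO_succ_div_of_isTheta {b p : ℕ → ℝ} {r x : ℝ}
    (hb : b =o[atTop] fun n => (n : ℝ) ^ (-r)) (hp : p =Θ[atTop] fun n => (n : ℝ) ^ x) :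
    (fun k => b (k + 1) / p (k + 1)) =o[atTop] fun k => ((k : ℝ) + 1) ^ (-(r + x)) := by
  have hp' : (fun n => (p n)⁻¹) =O[atTop] fun n => (n : ℝ) ^ (-x) := by
    simpa only [rpow_neg (Nat.cast_nonneg _)] using hp.symm.isBigO.inv_rev <|
      (eventually_gt_atTop 0).mono fun n hn h =>
        absurd h (rpow_pos_of_pos (Nat.cast_pos.2 hn) x).ne'
  refine ((hb.mul_isBigO hp').comp_tendsto (tendsto_add_atTop_nat 1)).congr (fun k => rfl)
    fun k => ?_
  simp only [Function.comp_apply]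
  push_cast
  rw [← rpow_add (by positivity), neg_add]

theorem recursion_asymptotics_of_littleO_general
    (a b' : ℕ → ℝ) (x r : ℝ)
    (hrec : ∀ n : ℕ, 1 ≤ n → a (n + 1) = ((n + x) / n) * a n + b' (n + 1))
    (hb : Tendsto (fun n : ℕ => b' n * (n : ℝ) ^ r) atTop (𝓝 0)) :
    (x < 1 - r → Tendsto (fun n : ℕ => a n / (n : ℝ) ^ (1 - r)) atTop (𝓝 0)) ∧
    (x = 1 - r → Tendsto (fun n : ℕ => a n / ((n : ℝ) ^ x * Real.log n)) atTop (𝓝 0)) ∧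
    (1 - r < x → ∃ C : ℝ, ∀ n : ℕ, 1 ≤ n → |a n| ≤ C * (n : ℝ) ^ x) := by
  obtain ⟨N, hN⟩ := exists_nat_ge (2 * max 1 |x|)
  set p : ℕ → ℝ := fun n => ∏ k ∈ Ico N n, ((k : ℝ) + x) / k
  have hN1 : 1 ≤ N := Nat.one_le_cast.1 (show (1 : ℝ) ≤ N by linarith [le_max_left 1 |x|])
  have hp_pos : ∀ n, 0 < p n := fun n =>
    prod_pos fun k hk => add_div_self_pos (hN.trans (Nat.cast_le.2 (mem_Ico.1 hk).1))
  have hp := isTheta_prod_Ico_add_div_rpow hN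
  set e : ℕ → ℝ := fun k => b' (k + 1) / p (k + 1)
  have he := isLittleO_succ_div_of_isTheta (isLittleO_rpow_neg_of_tendsto_mul_rpow hb) hp
  set c := a N / p N - ∑ k ∈ range N, e k
  have ha : (fun n => p n * (c + ∑ k ∈ range n, e k)) =ᶠ[atTop] a := by
    filter_upwards [eventually_ge_atTop N] with n hn
    have hsum : c + ∑ k ∈ range n, e k = a N / p N + ∑ k ∈ Ico N n, e k := by
      rw [← sum_range_add_sum_Ico _ hn]; ring
    rw [hsum, ← div_eq_div_add_sum_Ico_of_recurrence
      (fun n _ => (hp_pos n).ne') (fun n hn => (prod_Ico_succ_top hn _).trans (mul_comm _ _))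
      (fun n hn => hrec n (hN1.trans hn)) hn, mul_div_cancel₀ _ (hp_pos n).ne']
  refine ⟨fun hx => ?_, fun hx => ?_, fun hx => ?_⟩
  · refine ((hp.isBigO.mul_isLittleO
      (isLittleO_const_add_sum_range_rpow (by linarith) he c)).congr' ha ?_).tendsto_div_nhds_zero
    filter_upwards [eventually_gt_atTop 0] with n hn
    rw [← rpow_add (Nat.cast_pos.2 hn)]; ring_nf
  · have he' : e =o[atTop] fun k => ((k : ℝ) + 1)⁻¹ := by
      simpa only [show r + x = 1 by linarith, rpow_neg_one] using he
    exact ((hp.isBigO.mul_isLittleO (isLittleO_const_add_sum_range_log he' c)).congr' ha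
      EventuallyEq.rfl).tendsto_div_nhds_zero
  · obtain ⟨C, -, hC⟩ := bound_of_isBigO_nat_atTop <| (hp.isBigO.mul
      (isBigO_const_add_sum_range_rpow (by linarith) he.isBigO c)).congr' ha
      (Eventually.of_forall fun n => mul_one _)
    refine ⟨C, fun n hn => ?_⟩
    have hnx : 0 < (n : ℝ) ^ x := rpow_pos_of_pos (Nat.cast_pos.2 hn) x
    simpa [abs_of_pos hnx] using hC hnx.ne'

/-- Asymptotics of the recursion `a_{n+1} = ((n+x)/n) a_n + b_{n+1}` when `b_n = o(n^{-r})`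
for some `r > 0`: `a_n = o(n^{1-r})` if `x < 1-r`, `a_n = o(n^x log n)` if `x = 1-r`,
and `a_n = O(n^x)` if `x > 1-r`. -/
theorem recursion_asymptotics_of_littleO
    (a b' : ℕ → ℝ) (x r : ℝ) (hr : 0 < r)
    (hrec : ∀ n : ℕ, 1 ≤ n → a (n + 1) = ((n + x) / n) * a n + b' (n + 1))
    (hb : Tendsto (fun n : ℕ => b' n * (n : ℝ) ^ r) atTop (𝓝 0)) :
    (x < 1 - r → Tendsto (fun n : ℕ => a n / (n : ℝ) ^ (1 - r)) atTop (𝓝 0)) ∧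
    (x = 1 - r → Tendsto (fun n : ℕ => a n / ((n : ℝ) ^ x * Real.log n)) atTop (𝓝 0)) ∧
    (1 - r < x → ∃ C : ℝ, ∀ n : ℕ, 1 ≤ n → |a n| ≤ C * (n : ℝ) ^ x) :=
  recursion_asymptotics_of_littleO_general a b' x r hrec hb
end

section
/- For fixed j, the expected number of occurrences of X_j among the first n reinforced steps satisfies E[N_j(n)] = (1−p)Γ(j)Γ(n+p)/(Γ(n)Γ(j+p)) ∼ (1−p)Γ(j)/Γ(j+p) · n^p as n → ∞. -/
/-!
Taking expectations in the conditional-mean recursion gives `E N(n+1) = (n+p)/n · E N(n)`, which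
telescopes to the stated Gamma ratio because `Γ(x+1) = x Γ(x)`. The asymptotics is Wendel's limit
`Γ(n+p) / (Γ(n) n^p) → 1`, which follows from Euler's limit formula `GammaSeq p n → Γ(p)`.
-/

open MeasureTheory ProbabilityTheory Filter
open scoped Topology Nat

namespace Real

theorem Gamma_add_nat_eq_mul_prod {s : ℝ} (hs : ∀ k : ℕ, s ≠ -k) (n : ℕ) :
    Gamma (s + n) = Gamma s * ∏ i ∈ Finset.range n, (s + i) := by
  induction n with
  | zero => simp
  | succ n ih =>
    have hsn : s + n ≠ 0 := fun h => hs n (eq_neg_of_add_eq_zero_left h)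
    rw [Nat.cast_succ, ← add_assoc, Gamma_add_one hsn, ih, Finset.prod_range_succ]
    ring

theorem GammaSeq_mul_Gamma_add_nat_add_one {s : ℝ} (hs : ∀ k : ℕ, s ≠ -k) (n : ℕ) :
    GammaSeq s n * Gamma (s + n + 1) = n ^ s * n ! * Gamma s := by
  have hprod : ∏ i ∈ Finset.range (n + 1), (s + i) ≠ 0 :=
    Finset.prod_ne_zero_iff.2 fun i _ h => hs i (eq_neg_of_add_eq_zero_left h)
  rw [GammaSeq, add_assoc, ← Nat.cast_add_one, Gamma_add_nat_eq_mul_prod hs]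
  field_simp

theorem tendsto_Gamma_nat_add_div_mul_rpow {p : ℝ} (hp : ∀ k : ℕ, p ≠ -k) :
    Tendsto (fun n : ℕ => Gamma (n + p) / (Gamma n * (n : ℝ) ^ p)) atTop (𝓝 1) := by
  have hΓp : Gamma p ≠ 0 := Gamma_ne_zero hp
  have heuler : Tendsto (fun n => Gamma p / GammaSeq p n) atTop (𝓝 1) := by
    have h := (tendsto_const_nhds (x := Gamma p)).div (GammaSeq_tendsto_Gamma p) hΓp
    rwa [div_self hΓp] at h
  have hlim := (tendsto_natCast_div_add_atTop p).mul heuler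
  rw [mul_one] at hlim
  refine hlim.congr' ?_
  filter_upwards [eventually_gt_atTop 0] with n hn
  have hn₀ : (0 : ℝ) < n := Nat.cast_pos.2 hn
  have hnp : (n : ℝ) + p ≠ 0 := fun h => hp n (eq_neg_of_add_eq_zero_right h)
  have hpow : (n : ℝ) ^ p ≠ 0 := (rpow_pos_of_pos hn₀ p).ne'
  have hΓn : Gamma n ≠ 0 := (Gamma_pos_of_pos hn₀).ne'
  -- `Γ(p) / GammaSeq p n = Γ(n + p + 1) / (n ^ p n!) = (n + p) / n · Γ(n + p) / (Γ(n) n ^ p)`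
  have hseq := GammaSeq_mul_Gamma_add_nat_add_one hp n
  rw [← Gamma_nat_eq_factorial, Gamma_add_one hn₀.ne', add_comm p, Gamma_add_one hnp] at hseq
  have hseq0 : GammaSeq p n ≠ 0 := by
    rintro h
    simp [h, hpow, hn₀.ne', hΓn, hΓp] at hseq
  field_simp
  linear_combination -hseq

end Real

open Real in
theorem eq_Gamma_ratio_of_succ_eq {a : ℕ → ℝ} {p : ℝ} (hp : ∀ k : ℕ, p ≠ -k) {j : ℕ}
    (hj : 1 ≤ j) (ha : ∀ n, j ≤ n → a (n + 1) = ((n + p) / n) * a n) :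
    ∀ n, j ≤ n → a n = a j * Gamma j * Gamma (n + p) / (Gamma n * Gamma (j + p)) := by
  have hΓjp : Gamma (j + p) ≠ 0 := Gamma_ne_zero fun m h => hp (j + m) (by push_cast; linarith)
  intro n hn
  induction n, hn using Nat.le_induction with
  | base => field_simp [(Gamma_pos_of_pos (Nat.cast_pos.2 hj)).ne']
  | succ n hn ih =>
    have hn' : (n : ℝ) ≠ 0 := Nat.cast_ne_zero.2 (by omega)
    have hnp : (n : ℝ) + p ≠ 0 := fun h => hp n (eq_neg_of_add_eq_zero_right h)
    have hΓn : Gamma n ≠ 0 := (Gamma_pos_of_pos (Nat.cast_pos.2 (by omega))).ne'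
    rw [ha n hn, ih, Nat.cast_succ, add_right_comm, Gamma_add_one hnp, Gamma_add_one hn']
    field_simp

theorem integral_eq_const_mul_of_condExp_eq {Ω : Type*} {m m₀ : MeasurableSpace Ω}
    {μ : Measure Ω} (hm : m ≤ m₀) [SigmaFinite (μ.trim hm)] {f g : Ω → ℝ} {c : ℝ}
    (h : μ[f|m] =ᵐ[μ] fun ω => c * g ω) :
    ∫ ω, f ω ∂μ = c * ∫ ω, g ω ∂μ := by
  rw [← integral_condExp hm, integral_congr_ae h, integral_const_mul]

theorem expected_occurrence_count_general
    {Ω : Type*} {mΩ : MeasurableSpace Ω} {μ : Measure Ω} [IsProbabilityMeasure μ]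
    (p : ℝ) (hp : p ∈ Set.Ioo (0 : ℝ) 1)
    (j : ℕ) (hj : 1 ≤ j)
    (ℱ : Filtration ℕ mΩ) (N : ℕ → Ω → ℝ)
    (hcond : ∀ n, j ≤ n →
      μ[N (n + 1)|ℱ n] =ᵐ[μ] fun ω => (((n : ℝ) + p) / n) * N n ω)
    (hinit : ∫ ω, N j ω ∂μ = 1 - p) :
    (∀ n, j ≤ n → ∫ ω, N n ω ∂μ =
      (1 - p) * Real.Gamma j * Real.Gamma (n + p) / (Real.Gamma n * Real.Gamma (j + p))) ∧
    Tendsto (fun n : ℕ => (∫ ω, N n ω ∂μ) / (n : ℝ) ^ p) atTop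
      (𝓝 ((1 - p) * Real.Gamma j / Real.Gamma (j + p))) := by
  have hp' : ∀ k : ℕ, p ≠ -k := fun k => ((neg_nonpos.2 k.cast_nonneg).trans_lt hp.1).ne'
  have hmean := eq_Gamma_ratio_of_succ_eq (a := fun n => ∫ ω, N n ω ∂μ) hp' hj fun n hn =>
    integral_eq_const_mul_of_condExp_eq (ℱ.le n) (hcond n hn)
  rw [hinit] at hmean
  refine ⟨hmean, ?_⟩
  have hlim := (Real.tendsto_Gamma_nat_add_div_mul_rpow hp').const_mul
    ((1 - p) * Real.Gamma j / Real.Gamma (j + p))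
  rw [mul_one] at hlim
  refine hlim.congr' ?_
  filter_upwards [eventually_ge_atTop j] with n hn
  rw [hmean n hn]
  ring

/-- Expected occurrence count in the positively step-reinforced random walk:
`E[N_j(n)] = (1-p)Γ(j)Γ(n+p)/(Γ(n)Γ(j+p)) ∼ (1-p)Γ(j)/Γ(j+p) · n^p`. -/
theorem expected_occurrence_count
    {Ω : Type*} {mΩ : MeasurableSpace Ω} {μ : Measure Ω} [IsProbabilityMeasure μ]
    (p : ℝ) (hp : p ∈ Set.Ioo (0 : ℝ) 1)
    (j : ℕ) (hj : 1 ≤ j)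
    (ℱ : Filtration ℕ mΩ) (N : ℕ → Ω → ℝ)
    (hadapt : Adapted ℱ N) (hint : ∀ n, Integrable (N n) μ)
    (hcond : ∀ n, j ≤ n →
      μ[N (n + 1)|ℱ n] =ᵐ[μ] fun ω => (((n : ℝ) + p) / n) * N n ω)
    (hinit : ∫ ω, N j ω ∂μ = 1 - p) :
    (∀ n, j ≤ n → ∫ ω, N n ω ∂μ =
      (1 - p) * Real.Gamma j * Real.Gamma (n + p) / (Real.Gamma n * Real.Gamma (j + p))) ∧
    Tendsto (fun n : ℕ => (∫ ω, N n ω ∂μ) / (n : ℝ) ^ p) atTop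
      (𝓝 ((1 - p) * Real.Gamma j / Real.Gamma (j + p))) :=
  expected_occurrence_count_general p hp j hj ℱ N hcond hinit
end

section
/- For fixed j and p ∈ (0,1), N_j(n)/ω_n → 0 almost surely and in L^1, where ω_n = √n for 0 < p < 1/2, ω_n = √(n log n) for p = 1/2, and ω_n = n for 1/2 < p < 1. -/
/-!
With `a n = ∏_{j ≤ k < n} (k + p) / k`, the hypothesis says `E[N (n+1) | ℱ n] = (a (n+1) / a n) N n`,
so `N n / a n` (`n ≥ j`) is a nonnegative martingale: it converges a.s., and `E N n = a n E N j`.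
Since `1 + p/k ≤ exp (p/k)`, the harmonic bound gives `a n ≤ e^p n^p`, and `n^p = o(ω_n)` in each
of the three regimes. Hence `N n / ω_n = (N n / a n) (a n / ω_n) → 0` a.s., and
`E |N n / ω_n| = E N j · a n / ω_n → 0`.
-/

open MeasureTheory ProbabilityTheory Filter
open scoped Topology

def MeasureTheory.Filtration.shift {Ω : Type*} {mΩ : MeasurableSpace Ω}
    (ℱ : Filtration ℕ mΩ) (j : ℕ) : Filtration ℕ mΩ where
  seq n := ℱ (n + j)
  mono' _ _ h := ℱ.mono (Nat.add_le_add_right h j)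
  le' n := ℱ.le (n + j)

theorem MeasureTheory.Martingale.ae_tendsto_limitProcess_of_nonneg {Ω : Type*}
    {mΩ : MeasurableSpace Ω} {μ : Measure Ω} [IsFiniteMeasure μ] {ℱ : Filtration ℕ mΩ}
    {f : ℕ → Ω → ℝ} (hf : Martingale f ℱ μ) (hnonneg : ∀ n, 0 ≤ᵐ[μ] f n) :
    ∀ᵐ ω ∂μ, Tendsto (fun n => f n ω) atTop (𝓝 (ℱ.limitProcess f μ ω)) := by
  refine hf.submartingale.ae_tendsto_limitProcess (R := (∫ ω, f 0 ω ∂μ).toNNReal) fun n => ?_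
  have hnorm : ∫ ω, ‖f n ω‖ ∂μ = ∫ ω, f 0 ω ∂μ := by
    rw [integral_congr_ae (by filter_upwards [hnonneg n] with ω h using Real.norm_of_nonneg h)]
    simpa using (hf.setIntegral_eq (Nat.zero_le n) MeasurableSet.univ).symm
  rw [eLpNorm_one_eq_lintegral_enorm, ← ofReal_integral_norm_eq_lintegral_enorm (hf.integrable n),
    hnorm]
  rfl

section MultiplicativeMean

variable {Ω : Type*} {mΩ : MeasurableSpace Ω} {μ : Measure Ω} [IsFiniteMeasure μ]
  {ℱ : Filtration ℕ mΩ} {N : ℕ → Ω → ℝ} {c : ℕ → ℝ} {j : ℕ}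

theorem integral_eq_prod_mul_integral
    (hcond : ∀ n, j ≤ n → μ[N (n + 1)|ℱ n] =ᵐ[μ] fun ω => c n * N n ω) {n : ℕ} (hn : j ≤ n) :
    ∫ ω, N n ω ∂μ = (∏ k ∈ Finset.Ico j n, c k) * ∫ ω, N j ω ∂μ := by
  induction n, hn using Nat.le_induction with
  | base => simp
  | succ n hn ih =>
    rw [← integral_condExp (ℱ.le n), integral_congr_ae (hcond n hn), integral_const_mul, ih,
      Finset.prod_Ico_succ_top hn]
    ring

theorem martingale_shift_prod_inv_smul (hadapt : Adapted ℱ N) (hint : ∀ n, Integrable (N n) μ)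
    (hcond : ∀ n, j ≤ n → μ[N (n + 1)|ℱ n] =ᵐ[μ] fun ω => c n * N n ω)
    (hc : ∀ k, j ≤ k → c k ≠ 0) :
    Martingale (fun n => (∏ k ∈ Finset.Ico j (n + j), c k)⁻¹ • N (n + j)) (ℱ.shift j) μ := by
  refine martingale_nat (fun n => ((hadapt (n + j)).const_smul _).stronglyMeasurable)
    (fun n => (hint (n + j)).smul _) fun n => ?_
  have hnj : j ≤ n + j := Nat.le_add_left j n
  rw [Nat.add_right_comm]
  filter_upwards [condExp_smul (μ := μ) (∏ k ∈ Finset.Ico j (n + j + 1), c k)⁻¹ (N (n + j + 1))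
    (ℱ (n + j)), hcond (n + j) hnj] with ω hsmul hmul
  change _ = (μ[_|ℱ (n + j)]) ω
  rw [hsmul, Pi.smul_apply, Pi.smul_apply, hmul, Finset.prod_Ico_succ_top hnj, smul_eq_mul,
    smul_eq_mul, mul_inv, mul_assoc, inv_mul_cancel_left₀ (hc _ hnj)]

theorem ae_tendsto_div_of_tendsto_prod_div (hadapt : Adapted ℱ N) (hint : ∀ n, Integrable (N n) μ)
    (hnonneg : ∀ n, 0 ≤ᵐ[μ] N n)
    (hcond : ∀ n, j ≤ n → μ[N (n + 1)|ℱ n] =ᵐ[μ] fun ω => c n * N n ω)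
    (hc : ∀ k, j ≤ k → 0 < c k) {w : ℕ → ℝ}
    (hw : Tendsto (fun n => (∏ k ∈ Finset.Ico j n, c k) / w n) atTop (𝓝 0)) :
    ∀ᵐ ω ∂μ, Tendsto (fun n => N n ω / w n) atTop (𝓝 0) := by
  have ha : ∀ n, 0 < ∏ k ∈ Finset.Ico j (n + j), c k := fun n =>
    Finset.prod_pos fun k hk => hc k (Finset.mem_Ico.1 hk).1
  have hM := martingale_shift_prod_inv_smul hadapt hint hcond fun k hk => (hc k hk).ne'
  have hM_nonneg : ∀ n, 0 ≤ᵐ[μ] (∏ k ∈ Finset.Ico j (n + j), c k)⁻¹ • N (n + j) := fun n => by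
    filter_upwards [hnonneg (n + j)] with ω hω using smul_nonneg (inv_pos.2 (ha n)).le hω
  filter_upwards [hM.ae_tendsto_limitProcess_of_nonneg hM_nonneg] with ω hω
  have hprod := (hω.comp (tendsto_sub_atTop_nat j)).mul hw
  rw [mul_zero] at hprod
  refine hprod.congr' ?_
  filter_upwards [eventually_ge_atTop j] with n hn
  obtain ⟨m, rfl⟩ := Nat.exists_eq_add_of_le' hn
  simp only [Function.comp_apply, Nat.add_sub_cancel, Pi.smul_apply, smul_eq_mul]
  field_simp [(ha m).ne']

theorem tendsto_integral_abs_div_of_tendsto_prod_div (hnonneg : ∀ n, 0 ≤ᵐ[μ] N n)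
    (hcond : ∀ n, j ≤ n → μ[N (n + 1)|ℱ n] =ᵐ[μ] fun ω => c n * N n ω) {w : ℕ → ℝ}
    (hw_nonneg : ∀ n, 0 ≤ w n)
    (hw : Tendsto (fun n => (∏ k ∈ Finset.Ico j n, c k) / w n) atTop (𝓝 0)) :
    Tendsto (fun n => ∫ ω, |N n ω / w n| ∂μ) atTop (𝓝 0) := by
  have hmean := hw.mul_const (∫ ω, N j ω ∂μ)
  rw [zero_mul] at hmean
  refine hmean.congr' ?_
  filter_upwards [eventually_ge_atTop j] with n hn
  have habs : ∀ᵐ ω ∂μ, |N n ω / w n| = N n ω / w n := by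
    filter_upwards [hnonneg n] with ω hω using abs_of_nonneg (div_nonneg hω (hw_nonneg n))
  rw [integral_congr_ae habs, integral_div, integral_eq_prod_mul_integral hcond hn]
  ring

end MultiplicativeMean

theorem sum_Ico_inv_le_one_add_log {j : ℕ} (hj : 1 ≤ j) (n : ℕ) :
    ∑ k ∈ Finset.Ico j n, (k : ℝ)⁻¹ ≤ 1 + Real.log n :=
  calc ∑ k ∈ Finset.Ico j n, (k : ℝ)⁻¹
      ≤ ∑ k ∈ Finset.Icc 1 n, (k : ℝ)⁻¹ :=
        Finset.sum_le_sum_of_subset_of_nonneg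
          (fun k hk => by simp only [Finset.mem_Ico, Finset.mem_Icc] at hk ⊢; omega)
          fun _ _ _ => by positivity
    _ = harmonic n := by push_cast [harmonic_eq_sum_Icc]; rfl
    _ ≤ 1 + Real.log n := harmonic_le_one_add_log n

theorem prod_Ico_add_div_le_exp_mul_rpow {p : ℝ} (hp : 0 ≤ p) {j n : ℕ} (hj : 1 ≤ j)
    (hn : 1 ≤ n) :
    ∏ k ∈ Finset.Ico j n, ((k : ℝ) + p) / k ≤ Real.exp p * (n : ℝ) ^ p := by
  have hk : ∀ k ∈ Finset.Ico j n, (0 : ℝ) < k := fun k hk =>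
    Nat.cast_pos.2 (hj.trans (Finset.mem_Ico.1 hk).1)
  calc ∏ k ∈ Finset.Ico j n, ((k : ℝ) + p) / k
      ≤ ∏ k ∈ Finset.Ico j n, Real.exp (p * (k : ℝ)⁻¹) := by
        refine Finset.prod_le_prod (fun k hk' => (div_pos (by linarith [hk k hk']) (hk k hk')).le)
          fun k hk' => ?_
        rw [add_div, div_self (hk k hk').ne', ← div_eq_mul_inv, add_comm]
        exact Real.add_one_le_exp _
    _ = Real.exp (p * ∑ k ∈ Finset.Ico j n, (k : ℝ)⁻¹) := by rw [Finset.mul_sum, Real.exp_sum]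
    _ ≤ Real.exp (p * (1 + Real.log n)) :=
        Real.exp_le_exp.2 (mul_le_mul_of_nonneg_left (sum_Ico_inv_le_one_add_log hj n) hp)
    _ = Real.exp p * (n : ℝ) ^ p := by
        rw [mul_add, mul_one, Real.exp_add, Real.rpow_def_of_pos (by exact_mod_cast hn), mul_comm p]

noncomputable def normalizer (p : ℝ) (n : ℕ) : ℝ :=
  if p < 1 / 2 then Real.sqrt n
  else if p = 1 / 2 then Real.sqrt (n * Real.log n)
  else (n : ℝ)

theorem normalizer_nonneg (p : ℝ) (n : ℕ) : 0 ≤ normalizer p n := by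
  unfold normalizer
  split_ifs <;> positivity

theorem tendsto_natCast_rpow_atTop_zero {q : ℝ} (hq : q < 0) :
    Tendsto (fun n : ℕ => (n : ℝ) ^ q) atTop (𝓝 0) := by
  simpa [Function.comp_def] using
    (tendsto_rpow_neg_atTop (neg_pos.2 hq)).comp tendsto_natCast_atTop_atTop

theorem tendsto_rpow_div_normalizer {p : ℝ} (hp : p < 1) :
    Tendsto (fun n : ℕ => (n : ℝ) ^ p / normalizer p n) atTop (𝓝 0) := by
  rcases lt_trichotomy p (1 / 2) with hlt | rfl | hgt
  · refine (tendsto_natCast_rpow_atTop_zero (sub_neg.2 hlt)).congr' ?_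
    filter_upwards [eventually_gt_atTop 0] with n hn
    rw [normalizer, if_pos hlt, Real.sqrt_eq_rpow, Real.rpow_sub (by exact_mod_cast hn)]
  · have hlog : Tendsto (fun n : ℕ => (Real.log n)⁻¹) atTop (𝓝 0) :=
      (Real.tendsto_log_atTop.comp tendsto_natCast_atTop_atTop).inv_tendsto_atTop
    have hsqrt := (Real.continuous_sqrt.tendsto 0).comp hlog
    rw [Real.sqrt_zero] at hsqrt
    refine hsqrt.congr' ?_
    filter_upwards [eventually_gt_atTop 0] with n hn
    rw [normalizer, if_neg (lt_irrefl _), if_pos rfl, ← Real.sqrt_eq_rpow, Function.comp_apply,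
      ← Real.sqrt_div (Nat.cast_nonneg n), div_mul_cancel_left₀ (by exact_mod_cast hn.ne')]
  · refine (tendsto_natCast_rpow_atTop_zero (sub_neg.2 hp)).congr' ?_
    filter_upwards [eventually_gt_atTop 0] with n hn
    rw [normalizer, if_neg hgt.not_gt, if_neg hgt.ne', Real.rpow_sub (by exact_mod_cast hn),
      Real.rpow_one]

theorem tendsto_prod_Ico_add_div_div_normalizer {p : ℝ} (hp : p ∈ Set.Ioo 0 1) {j : ℕ}
    (hj : 1 ≤ j) :
    Tendsto (fun n : ℕ => (∏ k ∈ Finset.Ico j n, ((k : ℝ) + p) / k) / normalizer p n)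
      atTop (𝓝 0) := by
  have hupper := (tendsto_rpow_div_normalizer hp.2).const_mul (Real.exp p)
  rw [mul_zero] at hupper
  refine tendsto_of_tendsto_of_tendsto_of_le_of_le' tendsto_const_nhds hupper ?_ ?_
  · filter_upwards with n
    refine div_nonneg (Finset.prod_nonneg fun k _ => ?_) (normalizer_nonneg p n)
    exact div_nonneg (by linarith [hp.1, Nat.cast_nonneg (α := ℝ) k]) (Nat.cast_nonneg k)
  · filter_upwards [eventually_ge_atTop 1] with n hn
    rw [mul_div_assoc']
    exact div_le_div_of_nonneg_right (prod_Ico_add_div_le_exp_mul_rpow hp.1.le hj hn)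
      (normalizer_nonneg p n)

theorem occurrence_count_normalized_tendsto_zero_general
    {Ω : Type*} {mΩ : MeasurableSpace Ω} {μ : Measure Ω} [IsProbabilityMeasure μ]
    (p : ℝ) (hp : p ∈ Set.Ioo (0 : ℝ) 1)
    (j : ℕ) (hj : 1 ≤ j)
    (ℱ : Filtration ℕ mΩ) (N : ℕ → Ω → ℝ)
    (hadapt : Adapted ℱ N) (hint : ∀ n, Integrable (N n) μ)
    (hnonneg : ∀ n, 0 ≤ᵐ[μ] N n)
    (hcond : ∀ n, j ≤ n →
      μ[N (n + 1)|ℱ n] =ᵐ[μ] fun ω => (((n : ℝ) + p) / n) * N n ω)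
    (w : ℕ → ℝ)
    (hw : ∀ n : ℕ, w n =
      if p < 1 / 2 then Real.sqrt n
      else if p = 1 / 2 then Real.sqrt (n * Real.log n)
      else (n : ℝ)) :
    (∀ᵐ ω ∂μ, Tendsto (fun n : ℕ => N n ω / w n) atTop (𝓝 0)) ∧
    Tendsto (fun n : ℕ => ∫ ω, |N n ω / w n| ∂μ) atTop (𝓝 0) := by
  obtain rfl : w = normalizer p := funext hw
  have hc : ∀ k, j ≤ k → 0 < ((k : ℝ) + p) / k := fun k hk =>
    have hk0 : (0 : ℝ) < k := Nat.cast_pos.2 (hj.trans hk)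
    div_pos (by linarith [hp.1]) hk0
  have hratio := tendsto_prod_Ico_add_div_div_normalizer hp hj
  exact ⟨ae_tendsto_div_of_tendsto_prod_div hadapt hint hnonneg hcond hc hratio,
    tendsto_integral_abs_div_of_tendsto_prod_div hnonneg hcond (normalizer_nonneg p) hratio⟩

/-- For fixed `j` and `p ∈ (0,1)`, `N_j(n)/ω_n → 0` almost surely and in `L¹`, where
`ω_n = √n` for `p < 1/2`, `ω_n = √(n log n)` for `p = 1/2`, and `ω_n = n` for `p > 1/2`. -/
theorem occurrence_count_normalized_tendsto_zero
    {Ω : Type*} {mΩ : MeasurableSpace Ω} {μ : Measure Ω} [IsProbabilityMeasure μ]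
    (p : ℝ) (hp : p ∈ Set.Ioo (0 : ℝ) 1)
    (j : ℕ) (hj : 1 ≤ j)
    (ℱ : Filtration ℕ mΩ) (N : ℕ → Ω → ℝ)
    (hadapt : Adapted ℱ N) (hint : ∀ n, Integrable (N n) μ)
    (hnonneg : ∀ n, 0 ≤ᵐ[μ] N n)
    (hcond : ∀ n, j ≤ n →
      μ[N (n + 1)|ℱ n] =ᵐ[μ] fun ω => (((n : ℝ) + p) / n) * N n ω)
    (hinit : ∫ ω, N j ω ∂μ = 1 - p)
    (w : ℕ → ℝ)
    (hw : ∀ n : ℕ, w n =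
      if p < 1 / 2 then Real.sqrt n
      else if p = 1 / 2 then Real.sqrt (n * Real.log n)
      else (n : ℝ)) :
    (∀ᵐ ω ∂μ, Tendsto (fun n : ℕ => N n ω / w n) atTop (𝓝 0)) ∧
    Tendsto (fun n : ℕ => ∫ ω, |N n ω / w n| ∂μ) atTop (𝓝 0) :=
  occurrence_count_normalized_tendsto_zero_general p hp j hj ℱ N hadapt hint hnonneg hcond w hw
end
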